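/- Let d ≥ 1, α > 0, and let f, c : ℝ^d → ℂ be Schwartz functions satisfying −Δc + α² c = α² f on ℝ^d. Then ‖c − f‖_{L²(ℝ^d)} ≤ α^{-2} ‖Δf‖_{L²(ℝ^d)}. -/

import Mathlib

/-!
Put `u = c - f`. The equation says `Δc = α² u`, hence `α² u - Δu = Δf`. Integrating by parts,
`⟪u, Δu⟫_{L²} = -∑ᵢ ‖∂ᵢu‖²_{L²} ≤ 0`, so
`α² ‖u‖² ≤ ⟪u, α² u - Δu⟫ = ⟪u, Δf⟫ ≤ ‖u‖ ‖Δf‖` by Cauchy–Schwarz.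
-/

open MeasureTheory

/-- The Laplacian `Δg = Σ_k ∂²g/∂x_k²` on `ℝ^d`. -/
noncomputable def lap {d : ℕ} {F : Type*} [NormedAddCommGroup F] [NormedSpace ℝ F]
    (g : EuclideanSpace ℝ (Fin d) → F) (x : EuclideanSpace ℝ (Fin d)) : F :=
  ∑ i : Fin d,
    fderiv ℝ (fun y => fderiv ℝ g y (EuclideanSpace.single i 1)) x (EuclideanSpace.single i 1)

open SchwartzMap Laplacian LineDeriv
open scoped InnerProductSpace

namespace SchwartzMap

variable {E V : Type*} [NormedAddCommGroup E] [MeasurableSpace E] [BorelSpace E]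
  [NormedAddCommGroup V] [InnerProductSpace ℝ V] {μ : Measure E}

section TemperateGrowth

variable [NormedSpace ℝ E] [FiniteDimensional ℝ E] [μ.HasTemperateGrowth]

theorem eLpNorm_eq_ofReal_norm_toLp {F : Type*} [NormedAddCommGroup F] [NormedSpace ℝ F]
    (p : ENNReal) (u : 𝓢(E, F)) : eLpNorm u p μ = ENNReal.ofReal ‖u.toLp p μ‖ := by
  rw [norm_toLp, ENNReal.ofReal_toReal (u.eLpNorm_lt_top p μ).ne]

theorem real_inner_toLp_toLp (f g : 𝓢(E, V)) :
    ⟪f.toLp 2 μ, g.toLp 2 μ⟫_ℝ = ∫ x, ⟪f x, g x⟫_ℝ ∂μ := by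
  rw [L2.inner_def]
  refine integral_congr_ae ?_
  filter_upwards [f.coeFn_toLp 2 μ, g.coeFn_toLp 2 μ] with x hf hg
  rw [hf, hg]

theorem integrable_inner (f g : 𝓢(E, V)) : Integrable (fun x => ⟪f x, g x⟫_ℝ) μ :=
  (pairing (innerSL ℝ) f g).integrable

end TemperateGrowth

theorem integral_inner_lineDerivOp_lineDerivOp_self [NormedSpace ℝ E] [FiniteDimensional ℝ E]
    [μ.IsAddHaarMeasure] (u : 𝓢(E, V)) (v : E) :
    ∫ x, ⟪u x, ∂_{v} (∂_{v} u) x⟫_ℝ ∂μ = -∫ x, ‖∂_{v} u x‖ ^ 2 ∂μ := by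
  simp_rw [← real_inner_self_eq_norm_sq]
  exact integral_bilinear_lineDerivOp_right_eq_neg_left u (∂_{v} u) (innerSL ℝ) v

section Laplacian

variable [InnerProductSpace ℝ E] [FiniteDimensional ℝ E] [μ.IsAddHaarMeasure]

theorem integral_inner_laplacian_self_nonpos (u : 𝓢(E, V)) :
    ∫ x, ⟪u x, Δ u x⟫_ℝ ∂μ ≤ 0 := by
  simp_rw [laplacian_eq_sum (stdOrthonormalBasis ℝ E), sum_apply, inner_sum]
  rw [integral_finsetSum _ fun i _ => integrable_inner u _]
  refine Finset.sum_nonpos fun i _ => ?_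
  rw [integral_inner_lineDerivOp_lineDerivOp_self, neg_nonpos]
  exact integral_nonneg fun _ => sq_nonneg _

theorem mul_norm_toLp_le_norm_toLp_smul_sub_laplacian (r : ℝ) (u : 𝓢(E, V)) :
    r * ‖u.toLp 2 μ‖ ≤ ‖(r • u - Δ u).toLp 2 μ‖ := by
  set U := u.toLp 2 μ
  set H := (r • u - Δ u).toLp 2 μ
  have hH : H = r • U - (Δ u).toLp 2 μ := by
    simp only [H, U, ← toLpCLM_apply (𝕜 := ℝ), map_sub, map_smul]
  have hsq : ‖U‖ * (r * ‖U‖) ≤ ‖U‖ * ‖H‖ := calc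
    ‖U‖ * (r * ‖U‖) = ⟪U, H⟫_ℝ + ∫ x, ⟪u x, Δ u x⟫_ℝ ∂μ := by
      rw [← real_inner_toLp_toLp, hH, inner_sub_right, real_inner_smul_right,
        real_inner_self_eq_norm_sq]
      ring
    _ ≤ ⟪U, H⟫_ℝ := by linarith [integral_inner_laplacian_self_nonpos (μ := μ) u]
    _ ≤ ‖U‖ * ‖H‖ := real_inner_le_norm U H
  rcases (norm_nonneg U).eq_or_lt with hU | hU
  · rw [← hU, mul_zero]
    exact norm_nonneg H
  · exact le_of_mul_le_mul_left hsq hU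

theorem eLpNorm_le_inv_mul_eLpNorm_smul_sub_laplacian {r : ℝ} (hr : 0 < r) (u : 𝓢(E, V)) :
    eLpNorm u 2 μ ≤ ENNReal.ofReal r⁻¹ * eLpNorm (r • u - Δ u) 2 μ := by
  rw [eLpNorm_eq_ofReal_norm_toLp, eLpNorm_eq_ofReal_norm_toLp,
    ← ENNReal.ofReal_mul (inv_nonneg.2 hr.le)]
  exact ENNReal.ofReal_le_ofReal ((le_inv_mul_iff₀ hr).2
    (mul_norm_toLp_le_norm_toLp_smul_sub_laplacian r u))

end Laplacian

end SchwartzMap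

theorem lap_eq_laplacian {d : ℕ} {F : Type*} [NormedAddCommGroup F] [NormedSpace ℝ F]
    (f : 𝓢(EuclideanSpace ℝ (Fin d), F)) : lap ⇑f = ⇑(Δ f : 𝓢(EuclideanSpace ℝ (Fin d), F)) := by
  have hderiv (v : EuclideanSpace ℝ (Fin d)) (g : 𝓢(EuclideanSpace ℝ (Fin d), F)) :
      ⇑(∂_{v} g : 𝓢(EuclideanSpace ℝ (Fin d), F)) = fun y => fderiv ℝ g y v :=
    funext (lineDerivOp_apply_eq_fderiv v g)
  ext x
  simp [lap, laplacian_eq_sum (EuclideanSpace.basisFun (Fin d) ℝ), sum_apply, hderiv]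

theorem order_parameter_close_to_density_general (d : ℕ) (α : ℝ) (hα : 0 < α)
    (f c : SchwartzMap (EuclideanSpace ℝ (Fin d)) ℂ)
    (heq : ∀ x, -lap (⇑c) x + (α : ℂ) ^ 2 * c x = (α : ℂ) ^ 2 * f x) :
    eLpNorm (fun x => c x - f x) 2 volume ≤
      ENNReal.ofReal (α ^ 2)⁻¹ * eLpNorm (lap (⇑f)) 2 volume := by
  have hres : α ^ 2 • (c - f) - Δ (c - f) = Δ f := by
    ext x
    have hx := heq x
    rw [lap_eq_laplacian] at hx
    have hsub : Δ (c - f) = Δ c - Δ f := map_sub (laplacianCLM ℝ _ _) c f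
    simp only [hsub, sub_apply, smul_apply, Complex.real_smul]
    push_cast
    linear_combination hx
  rw [lap_eq_laplacian, ← hres]
  exact eLpNorm_le_inv_mul_eLpNorm_smul_sub_laplacian (pow_pos hα 2) (c - f)

theorem order_parameter_close_to_density (d : ℕ) (hd : 1 ≤ d) (α : ℝ) (hα : 0 < α)
    (f c : SchwartzMap (EuclideanSpace ℝ (Fin d)) ℂ)
    (heq : ∀ x, -lap (⇑c) x + (α : ℂ) ^ 2 * c x = (α : ℂ) ^ 2 * f x) :
    eLpNorm (fun x => c x - f x) 2 volume ≤
      ENNReal.ofReal (α ^ 2)⁻¹ * eLpNorm (lap (⇑f)) 2 volume :=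
  order_parameter_close_to_density_general d α hα f c heq
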